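/- Suppose B ∈ (0,1) solves equation (B). Then for every x ∈ (-B,B) one has U(x) - U(-x) ≥ -c₂; equivalently, (c₁/(2μ²))·(ln((1+x)/(1-x)) - 2x/(1-B²)) + c₂ ≥ 0 for all x ∈ (-B,B), with equality as x → B. -/
import Mathlib


noncomputable section

open Filter

/-- The function `U₁(x) = (c₁(1-x)/(4μ²))·(ln((1+x)/(1-x)) + 2/(1-B²))`. -/
def U₁ (μ c₁ B x : ℝ) : ℝ :=
  c₁ * (1 - x) / (4 * μ ^ 2) * (Real.log ((1 + x) / (1 - x)) + 2 / (1 - B ^ 2))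

/-- The function `U` of the switching problem: `U(x) = U₁(x)` for `x ∈ (-B, 1]` and
`U(x) = U₁(-x) + c₂` for `x ∈ (-1, -B]`. -/
def Ufun (μ c₁ c₂ B x : ℝ) : ℝ :=
  if -B < x then U₁ μ c₁ B x else U₁ μ c₁ B (-x) + c₂

/-- Suppose `B ∈ (0,1)` solves equation (B). Then for every
`x ∈ (-B,B)` one has `U(x) - U(-x) ≥ -c₂`; equivalently,
`(c₁/(2μ²))·(ln((1+x)/(1-x)) - 2x/(1-B²)) + c₂ ≥ 0` for all `x ∈ (-B,B)`, with
equality as `x → B`. -/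
theorem U_switching_inequality (μ c₀ c₁ c₂ : ℝ) (hμ : 0 < μ) (hc₀ : 0 < c₀)
    (hc₁ : 0 < c₁) (hc₂ : 0 < c₂) (B : ℝ) (hB : B ∈ Set.Ioo (0 : ℝ) 1)
    (hBeq : Real.log ((1 - B) / (1 + B)) + 2 * B / (1 - B ^ 2) = 2 * μ ^ 2 * c₂ / c₁) :
    (∀ x ∈ Set.Ioo (-B) B, Ufun μ c₁ c₂ B x - Ufun μ c₁ c₂ B (-x) ≥ -c₂) ∧
    (∀ x ∈ Set.Ioo (-B) B,
      c₁ / (2 * μ ^ 2) * (Real.log ((1 + x) / (1 - x)) - 2 * x / (1 - B ^ 2)) + c₂ ≥ 0) ∧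
    Tendsto (fun x : ℝ =>
        c₁ / (2 * μ ^ 2) * (Real.log ((1 + x) / (1 - x)) - 2 * x / (1 - B ^ 2)) + c₂)
      (nhdsWithin B (Set.Iio B)) (nhds 0) := by
  obtain ⟨hB0, hB1⟩ := hB
  have hμ2 : (0:ℝ) < μ ^ 2 := by positivity
  have hK : (0:ℝ) < 1 - B ^ 2 := by nlinarith
  set K : ℝ := 1 - B ^ 2 with hKdef
  set h : ℝ → ℝ := fun x => Real.log (1 + x) - Real.log (1 - x) - 2 * x / K with hdef
  -- h is strictly antitone on Icc (-B) B
  have hanti : StrictAntiOn h (Set.Icc (-B) B) := by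
    apply strictAntiOn_of_deriv_neg (convex_Icc _ _)
    · apply ContinuousOn.sub
      · apply ContinuousOn.sub
        · apply ContinuousOn.log
          · exact continuousOn_const.add continuousOn_id
          · intro x hx
            have := hx.1
            nlinarith [hx.1, hx.2]
        · apply ContinuousOn.log
          · exact continuousOn_const.sub continuousOn_id
          · intro x hx
            nlinarith [hx.1, hx.2]
      · exact ((continuousOn_const.mul continuousOn_id).div_const K)
    · intro x hx
      rw [interior_Icc] at hx
      obtain ⟨hx1, hx2⟩ := hx
      have h1x : (0:ℝ) < 1 + x := by nlinarith
      have h2x : (0:ℝ) < 1 - x := by nlinarith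
      have d1 : HasDerivAt (fun y : ℝ => Real.log (1 + y)) (1 / (1 + x)) x := by
        have := ((hasDerivAt_id x).const_add 1).log (ne_of_gt h1x)
        simpa using this
      have d2 : HasDerivAt (fun y : ℝ => Real.log (1 - y)) (-1 / (1 - x)) x := by
        have := ((hasDerivAt_id x).const_sub 1).log (ne_of_gt h2x)
        simpa using this
      have d3 : HasDerivAt (fun y : ℝ => 2 * y / K) (2 / K) x := by
        have := ((hasDerivAt_id x).const_mul 2).div_const K
        simpa using this
      have dh : HasDerivAt h (1 / (1 + x) - -1 / (1 - x) - 2 / K) x :=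
        ((d1.sub d2).sub d3)
      rw [dh.deriv]
      have hx2B : x ^ 2 < B ^ 2 := sq_lt_sq' hx1 hx2
      have hxx : (0:ℝ) < 1 - x ^ 2 := by nlinarith
      have heq : 1 / (1 + x) - -1 / (1 - x) = 2 / (1 - x ^ 2) := by
        field_simp
        ring
      rw [heq]
      have : 2 / (1 - x ^ 2) < 2 / K := by
        apply div_lt_div_of_pos_left (by norm_num) hK
        simp only [hKdef]; nlinarith
      linarith
  -- value of h at B
  have hhB : h B = -(2 * μ ^ 2 * c₂ / c₁) := by
    have h1B : (0:ℝ) < 1 + B := by linarith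
    have h2B : (0:ℝ) < 1 - B := by linarith
    have : Real.log ((1 - B) / (1 + B)) = Real.log (1 - B) - Real.log (1 + B) :=
      Real.log_div (ne_of_gt h2B) (ne_of_gt h1B)
    simp only [hdef]
    rw [this] at hBeq
    linarith
  -- the key inequality (part 2)
  have key : ∀ x ∈ Set.Ioo (-B) B,
      c₁ / (2 * μ ^ 2) * (Real.log ((1 + x) / (1 - x)) - 2 * x / (1 - B ^ 2)) + c₂ ≥ 0 := by
    intro x hx
    obtain ⟨hx1, hx2⟩ := hx
    have h1x : (0:ℝ) < 1 + x := by nlinarith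
    have h2x : (0:ℝ) < 1 - x := by nlinarith
    have hlog : Real.log ((1 + x) / (1 - x)) = Real.log (1 + x) - Real.log (1 - x) :=
      Real.log_div (ne_of_gt h1x) (ne_of_gt h2x)
    have hgt : h B < h x :=
      hanti ⟨le_of_lt hx1, le_of_lt hx2⟩ ⟨by linarith, le_refl B⟩ hx2
    have hpos : (0:ℝ) < c₁ / (2 * μ ^ 2) := by positivity
    have : c₁ / (2 * μ ^ 2) * h B + c₂ ≤ c₁ / (2 * μ ^ 2) * h x + c₂ := by
      have := mul_le_mul_of_nonneg_left (le_of_lt hgt) (le_of_lt hpos)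
      linarith
    have hz : c₁ / (2 * μ ^ 2) * h B + c₂ = 0 := by
      rw [hhB]
      field_simp
      ring
    have hx' : c₁ / (2 * μ ^ 2) * (Real.log ((1 + x) / (1 - x)) - 2 * x / (1 - B ^ 2)) + c₂
        = c₁ / (2 * μ ^ 2) * h x + c₂ := by
      simp only [hdef, hlog, hKdef]
    rw [hx']
    linarith
  refine ⟨?_, key, ?_⟩
  · -- part 1
    intro x hx
    obtain ⟨hx1, hx2⟩ := hx
    have h1x : (0:ℝ) < 1 + x := by nlinarith
    have h2x : (0:ℝ) < 1 - x := by nlinarith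
    have hxneg : -B < -x := by linarith
    rw [Ufun, Ufun, if_pos hx1, if_pos hxneg]
    have hlog : Real.log ((1 + x) / (1 - x)) = Real.log (1 + x) - Real.log (1 - x) :=
      Real.log_div (ne_of_gt h1x) (ne_of_gt h2x)
    have hlog2 : Real.log ((1 + -x) / (1 - -x)) = Real.log (1 - x) - Real.log (1 + x) := by
      rw [show (1 + -x) = 1 - x by ring, show (1 - -x) = 1 + x by ring]
      exact Real.log_div (ne_of_gt h2x) (ne_of_gt h1x)
    have hkey := key x ⟨hx1, hx2⟩
    rw [hlog] at hkey
    rw [U₁, U₁, hlog, hlog2]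
    have hμne : μ ≠ 0 := ne_of_gt hμ
    have hKne : (1 : ℝ) - B ^ 2 ≠ 0 := ne_of_gt hK
    have hiden : c₁ * (1 - x) / (4 * μ ^ 2) * (Real.log (1 + x) - Real.log (1 - x) + 2 / (1 - B ^ 2))
        - c₁ * (1 - -x) / (4 * μ ^ 2) * (Real.log (1 - x) - Real.log (1 + x) + 2 / (1 - B ^ 2))
        = c₁ / (2 * μ ^ 2) * (Real.log (1 + x) - Real.log (1 - x) - 2 * x / (1 - B ^ 2)) := by
      field_simp
      ring
    rw [hiden]
    linarith
  · -- tendsto part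
    have h1B : (0:ℝ) < 1 + B := by linarith
    have h2B : (0:ℝ) < 1 - B := by linarith
    have hdiv : ContinuousAt (fun x : ℝ => (1 + x) / (1 - x)) B :=
      (continuousAt_const.add continuousAt_id).div (continuousAt_const.sub continuousAt_id)
        (by simpa using ne_of_gt h2B)
    have hquot : (0:ℝ) < (1 + B) / (1 - B) := div_pos h1B h2B
    have hlogc : ContinuousAt (fun x : ℝ => Real.log ((1 + x) / (1 - x))) B :=
      hdiv.log (ne_of_gt hquot)
    have hF : ContinuousAt (fun x : ℝ =>
        c₁ / (2 * μ ^ 2) * (Real.log ((1 + x) / (1 - x)) - 2 * x / (1 - B ^ 2)) + c₂) B := by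
      apply ContinuousAt.add _ continuousAt_const
      exact continuousAt_const.mul
        (hlogc.sub ((continuousAt_const.mul continuousAt_id).div_const _))
    have hFB : c₁ / (2 * μ ^ 2) * (Real.log ((1 + B) / (1 - B)) - 2 * B / (1 - B ^ 2)) + c₂ = 0 := by
      have hlogB : Real.log ((1 + B) / (1 - B)) = Real.log (1 + B) - Real.log (1 - B) :=
        Real.log_div (ne_of_gt h1B) (ne_of_gt h2B)
      rw [hlogB]
      have : c₁ / (2 * μ ^ 2) * h B + c₂ = 0 := by rw [hhB]; field_simp; ring
      simp only [hdef, hKdef] at this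
      linarith
    have := hF.tendsto.mono_left (nhdsWithin_le_nhds (s := Set.Iio B))
    rwa [hFB] at this
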